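/- arXiv:2504.06903 — 2 statements merged into one kernel-verified Lean document; each statement's English description precedes it below -/
import Mathlib

section
/- Let T₁ and T₂ be disjoint nonempty finite sets with cardinalities N₁ and N₂, and let a : T₁ ∪ T₂ → ℝ. Define p̂₁ = (1/N₁)·Σ_{i∈T₁} a_i, p̂₂ = (1/N₂)·Σ_{i∈T₂} a_i, λ = N₁/(N₁+N₂), and p̂ = λ·p̂₁ + (1−λ)·p̂₂. Then for all real numbers B₁ and B₂, Σ_{i∈T₁} [ (a_i − p̂)² − (a_i − B₁)² ] ≥ N₁·[ ((1−λ)²/2)·(B₁ − B₂)² − 2(1−λ)²·(p̂₁ − B₁)² − 2(1−λ)²·(p̂₂ − B₂)² − (p̂₁ − B₁)² ]. -/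
/-- Deterministic lower bound for the excess squared-error loss on a block when two
communities are merged: with `p̂₁, p̂₂` the empirical means of `a` over disjoint nonempty
finite sets `T₁, T₂` of cardinalities `N₁, N₂`, `λ = N₁/(N₁+N₂)` and
`p̂ = λ·p̂₁ + (1−λ)·p̂₂`, for all reals `B₁, B₂`,
`∑_{i∈T₁} [(a i − p̂)² − (a i − B₁)²]
  ≥ N₁·[((1−λ)²/2)·(B₁−B₂)² − 2(1−λ)²·(p̂₁−B₁)² − 2(1−λ)²·(p̂₂−B₂)² − (p̂₁−B₁)²]`. -/
theorem merged_communities_loss_lower_bound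
    {ι : Type*} (T₁ T₂ : Finset ι) (hdisj : Disjoint T₁ T₂)
    (hT₁ : T₁.Nonempty) (hT₂ : T₂.Nonempty) (a : ι → ℝ) (B₁ B₂ : ℝ) :
    letI N₁ : ℝ := T₁.card
    letI N₂ : ℝ := T₂.card
    letI p₁ : ℝ := (∑ i ∈ T₁, a i) / N₁
    letI p₂ : ℝ := (∑ i ∈ T₂, a i) / N₂
    letI lam : ℝ := N₁ / (N₁ + N₂)
    letI phat : ℝ := lam * p₁ + (1 - lam) * p₂
    (∑ i ∈ T₁, ((a i - phat) ^ 2 - (a i - B₁) ^ 2))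
      ≥ N₁ * (((1 - lam) ^ 2 / 2) * (B₁ - B₂) ^ 2
          - 2 * (1 - lam) ^ 2 * (p₁ - B₁) ^ 2
          - 2 * (1 - lam) ^ 2 * (p₂ - B₂) ^ 2
          - (p₁ - B₁) ^ 2) := by
  set N₁ : ℝ := (T₁.card : ℝ) with hN₁def
  set N₂ : ℝ := (T₂.card : ℝ) with hN₂def
  set p₁ : ℝ := (∑ i ∈ T₁, a i) / N₁ with hp₁def
  set p₂ : ℝ := (∑ i ∈ T₂, a i) / N₂ with hp₂def
  set lam : ℝ := N₁ / (N₁ + N₂) with hlamdef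
  set phat : ℝ := lam * p₁ + (1 - lam) * p₂ with hphatdef
  have hN₁ : (0:ℝ) < N₁ := by
    rw [hN₁def]; exact_mod_cast Finset.card_pos.mpr hT₁
  have hN₂ : (0:ℝ) < N₂ := by
    rw [hN₂def]; exact_mod_cast Finset.card_pos.mpr hT₂
  have hS₁ : ∑ i ∈ T₁, a i = N₁ * p₁ := by
    rw [hp₁def]; field_simp
  have hsum : (∑ i ∈ T₁, ((a i - phat) ^ 2 - (a i - B₁) ^ 2))
      = 2 * (B₁ - phat) * (∑ i ∈ T₁, a i) + N₁ * (phat ^ 2 - B₁ ^ 2) := by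
    rw [Finset.mul_sum]
    rw [show N₁ * (phat ^ 2 - B₁ ^ 2) = ∑ _i ∈ T₁, (phat ^ 2 - B₁ ^ 2) by
      simp [Finset.sum_const, hN₁def, mul_comm]; ring]
    rw [← Finset.sum_add_distrib]
    exact Finset.sum_congr rfl fun i _ => by ring
  rw [hsum, hS₁]
  have hlam : 1 - lam = N₂ / (N₁ + N₂) := by
    rw [hlamdef]; field_simp; ring
  have hkey : 2 * (B₁ - phat) * p₁ + (phat ^ 2 - B₁ ^ 2)
      ≥ ((1 - lam) ^ 2 / 2) * (B₁ - B₂) ^ 2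
          - 2 * (1 - lam) ^ 2 * (p₁ - B₁) ^ 2
          - 2 * (1 - lam) ^ 2 * (p₂ - B₂) ^ 2
          - (p₁ - B₁) ^ 2 := by
    have h1 : p₁ - phat = (1 - lam) * (p₁ - p₂) := by
      rw [hphatdef]; ring
    have hμ : (0:ℝ) ≤ (1 - lam) ^ 2 := sq_nonneg _
    have hbase : 2 * (p₁ - p₂) ^ 2 - (B₁ - B₂) ^ 2 + 4 * (p₁ - B₁) ^ 2
        + 4 * (p₂ - B₂) ^ 2 ≥ 0 := by
      nlinarith [sq_nonneg (B₁ - B₂ + 2 * (p₁ - B₁) - 2 * (p₂ - B₂)),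
        sq_nonneg ((p₁ - B₁) + (p₂ - B₂)), sq_nonneg ((p₁ - B₁) - (p₂ - B₂))]
    have h2 : 2 * (B₁ - phat) * p₁ + (phat ^ 2 - B₁ ^ 2)
        = (p₁ - phat) ^ 2 - (p₁ - B₁) ^ 2 := by ring
    rw [h2, h1, mul_pow]
    nlinarith [mul_nonneg hμ hbase]
  calc 2 * (B₁ - phat) * (N₁ * p₁) + N₁ * (phat ^ 2 - B₁ ^ 2)
      = N₁ * (2 * (B₁ - phat) * p₁ + (phat ^ 2 - B₁ ^ 2)) := by ring
    _ ≥ _ := by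
        apply mul_le_mul_of_nonneg_left hkey hN₁.le
end

section
/- Let K and K̃ be positive integers with K̃ < K. Let S_p and S_q be finite sets, let G₁, …, G_K be pairwise disjoint finite sets, and let Ĝ₁, …, Ĝ_K̃ be finite sets whose union contains S_p ∪ S_q. Suppose t ≥ 0 is a real number such that |G_l ∩ S_p| ≥ t and |G_l ∩ S_q| ≥ t for every l ∈ {1,…,K}, and let B be a K × K real matrix whose rows are pairwise distinct. Then there exist k₁, k₂ ∈ {1,…,K̃} and l₁, l₂, l₃ ∈ {1,…,K} with l₁ ≠ l₂ such that |Ĝ_{k₁} ∩ G_{l₁} ∩ S_p| ≥ t/K̃, |Ĝ_{k₁} ∩ G_{l₂} ∩ S_p| ≥ t/K̃, |Ĝ_{k₂} ∩ G_{l₃} ∩ S_q| ≥ t/K̃, and B_{l₁ l₃} ≠ B_{l₂ l₃}. -/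
/-!
Each true community `G l` has at least `t` points of `Sp`, spread over the `K̃` estimated
communities, so some estimated community `k(l)` holds `t / K̃` of them. As `K̃ < K`, the map
`l ↦ k(l)` is not injective, so two distinct true communities `l₁ ≠ l₂` share an estimated
community; distinct rows of `B` then differ in some column `l₃`, and `Sq` is handled like `Sp`.
-/

open Finset

theorem Finset.exists_div_card_le_card_inter {α κ : Type*} [DecidableEq α] [Fintype κ]
    [Nonempty κ] (s : κ → Finset α) {S : Finset α} (hS : S ⊆ univ.biUnion s) {t : ℝ}
    (ht : t ≤ #S) : ∃ k, t / Fintype.card κ ≤ #(s k ∩ S) := by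
  have hcard : (0 : ℝ) < Fintype.card κ := by exact_mod_cast Fintype.card_pos
  have hS_cover : S ⊆ univ.biUnion fun k ↦ s k ∩ S := fun x hx ↦ by
    obtain ⟨k, -, hk⟩ := mem_biUnion.mp (hS hx)
    exact mem_biUnion.mpr ⟨k, mem_univ k, mem_inter.mpr ⟨hk, hx⟩⟩
  have hsum : ∑ _k : κ, t / Fintype.card κ ≤ ∑ k, (#(s k ∩ S) : ℝ) :=
    calc ∑ _k : κ, t / Fintype.card κ = t := by
          rw [sum_const, card_univ, nsmul_eq_mul, mul_div_cancel₀ _ hcard.ne']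
      _ ≤ #S := ht
      _ ≤ #(univ.biUnion fun k ↦ s k ∩ S) := by exact_mod_cast card_le_card hS_cover
      _ ≤ ∑ k, (#(s k ∩ S) : ℝ) := by exact_mod_cast card_biUnion_le
  obtain ⟨k, -, hk⟩ := exists_le_of_sum_le univ_nonempty hsum
  exact ⟨k, hk⟩

theorem pigeonhole_merged_communities_general
    {ι : Type*} [DecidableEq ι]
    (K Kt : ℕ) (hKt : 0 < Kt) (hKtK : Kt < K)
    (Sp Sq : Finset ι) (G : Fin K → Finset ι) (Ghat : Fin Kt → Finset ι)
    (hcover : Sp ∪ Sq ⊆ Finset.univ.biUnion Ghat)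
    (t : ℝ)
    (hGp : ∀ l : Fin K, t ≤ ((G l ∩ Sp).card : ℝ))
    (hGq : ∀ l : Fin K, t ≤ ((G l ∩ Sq).card : ℝ))
    (B : Fin K → Fin K → ℝ)
    (hB : ∀ l₁ l₂ : Fin K, l₁ ≠ l₂ → B l₁ ≠ B l₂) :
    ∃ (k₁ k₂ : Fin Kt) (l₁ l₂ l₃ : Fin K), l₁ ≠ l₂ ∧
      t / Kt ≤ ((Ghat k₁ ∩ G l₁ ∩ Sp).card : ℝ) ∧
      t / Kt ≤ ((Ghat k₁ ∩ G l₂ ∩ Sp).card : ℝ) ∧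
      t / Kt ≤ ((Ghat k₂ ∩ G l₃ ∩ Sq).card : ℝ) ∧
      B l₁ l₃ ≠ B l₂ l₃ := by
  have : Nonempty (Fin Kt) := Fin.pos_iff_nonempty.mp hKt
  have hcover_of_subset {S : Finset ι} (hS : S ⊆ Sp ∪ Sq) : S ⊆ univ.biUnion Ghat :=
    hS.trans hcover
  choose kp hkp using fun l ↦ exists_div_card_le_card_inter Ghat
    (hcover_of_subset <| inter_subset_right.trans subset_union_left) (hGp l)
  choose kq hkq using fun l ↦ exists_div_card_le_card_inter Ghat
    (hcover_of_subset <| inter_subset_right.trans subset_union_right) (hGq l)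
  simp only [Fintype.card_fin, ← inter_assoc] at hkp hkq
  obtain ⟨l₁, l₂, hne, hshared⟩ :=
    Fintype.exists_ne_map_eq_of_card_lt kp (by simpa using hKtK)
  obtain ⟨l₃, hl₃⟩ := Function.ne_iff.mp (hB l₁ l₂ hne)
  exact ⟨kp l₁, kq l₃, l₁, l₂, l₃, hne, hkp l₁, hshared ▸ hkp l₂, hkq l₃, hl₃⟩

/-- Deterministic pigeonhole core: if `K̃ < K`, the true communities `G l` each meet
`S_p` and `S_q` in at least `t` elements, the estimated communities `Ĝ k` cover
`S_p ∪ S_q`, and the rows of `B` are pairwise distinct, then there exist estimated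
communities `k₁, k₂` and true communities `l₁ ≠ l₂, l₃` such that `Ĝ k₁` contains at
least `t/K̃` elements of both `G l₁ ∩ S_p` and `G l₂ ∩ S_p`, `Ĝ k₂` contains at least
`t/K̃` elements of `G l₃ ∩ S_q`, and `B l₁ l₃ ≠ B l₂ l₃`. -/
theorem pigeonhole_merged_communities
    {ι : Type*} [DecidableEq ι]
    (K Kt : ℕ) (hKt : 0 < Kt) (hKtK : Kt < K)
    (Sp Sq : Finset ι) (G : Fin K → Finset ι) (Ghat : Fin Kt → Finset ι)
    (hGdisj : ∀ l₁ l₂ : Fin K, l₁ ≠ l₂ → Disjoint (G l₁) (G l₂))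
    (hcover : Sp ∪ Sq ⊆ Finset.univ.biUnion Ghat)
    (t : ℝ) (ht : 0 ≤ t)
    (hGp : ∀ l : Fin K, t ≤ ((G l ∩ Sp).card : ℝ))
    (hGq : ∀ l : Fin K, t ≤ ((G l ∩ Sq).card : ℝ))
    (B : Fin K → Fin K → ℝ)
    (hB : ∀ l₁ l₂ : Fin K, l₁ ≠ l₂ → B l₁ ≠ B l₂) :
    ∃ (k₁ k₂ : Fin Kt) (l₁ l₂ l₃ : Fin K), l₁ ≠ l₂ ∧
      t / Kt ≤ ((Ghat k₁ ∩ G l₁ ∩ Sp).card : ℝ) ∧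
      t / Kt ≤ ((Ghat k₁ ∩ G l₂ ∩ Sp).card : ℝ) ∧
      t / Kt ≤ ((Ghat k₂ ∩ G l₃ ∩ Sq).card : ℝ) ∧
      B l₁ l₃ ≠ B l₂ l₃ :=
  pigeonhole_merged_communities_general K Kt hKt hKtK Sp Sq G Ghat hcover t hGp hGq B hB
end
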